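/- Let T>0, λ>0, γ>0, σ>0, α>0, x∈ℝ and t∈[0,T], and suppose (xⱼ)_{j∈ℕ} is a real sequence with (1/n)·Σ_{j=1}ⁿ xⱼ → x̄∈ℝ as n→∞. Fix i∈ℕ and set x̄ₙ = (1/n)·Σ_{j=1}ⁿ xⱼ; for n≥i let Xᵢ^{(n)}(t) = ((x̄ₙ−xᵢ)/(e^{2θ̂T}−1))e^{θ₊t} − ((x̄ₙ−xᵢ)/(1−e^{−2θ̂T}))e^{θ₋t} − (x̄ₙ/(e^{2ρ̂(n)T}−1))e^{ρ₊(n)t} + (x̄ₙ/(1−e^{−2ρ̂(n)T}))e^{ρ₋(n)t}. Then Xᵢ^{(n)}(t) converges as n→∞ to (x̄−xᵢ)/(e^{2θ̂T}−1)·e^{θ₊t} − (x̄−xᵢ)/(1−e^{−2θ̂T})·e^{θ₋t} + x̄·e^{−γt/λ}/(1−e^{−γT/λ}) − x̄/(e^{γT/λ}−1). -/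

import Mathlib

open Set Filter

noncomputable def thetaHat (lam gam sig al : ℝ) : ℝ :=
  Real.sqrt (gam ^ 2 + 4 * al * sig ^ 2 * lam) / (2 * lam)

noncomputable def rhoHat (n : ℕ) (lam gam sig al : ℝ) : ℝ :=
  Real.sqrt (((n : ℝ) - 1) ^ 2 * gam ^ 2 + 4 * ((n : ℝ) + 1) * al * sig ^ 2 * lam)
    / (2 * ((n : ℝ) + 1) * lam)

noncomputable def thetaPlus (lam gam sig al : ℝ) : ℝ :=
  gam / (2 * lam) + thetaHat lam gam sig al

noncomputable def thetaMinus (lam gam sig al : ℝ) : ℝ :=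
  gam / (2 * lam) - thetaHat lam gam sig al

noncomputable def rhoPlus (n : ℕ) (lam gam sig al : ℝ) : ℝ :=
  -(((n : ℝ) - 1) * gam) / (2 * ((n : ℝ) + 1) * lam) + rhoHat n lam gam sig al

noncomputable def rhoMinus (n : ℕ) (lam gam sig al : ℝ) : ℝ :=
  -(((n : ℝ) - 1) * gam) / (2 * ((n : ℝ) + 1) * lam) - rhoHat n lam gam sig al

/-- Agent `i`'s equilibrium strategy in the `n`-player game, where
`x̄ₙ = (1/n)·Σ_{j=1}ⁿ xⱼ`. -/
noncomputable def Xin (lam gam sig al T : ℝ) (x : ℕ → ℝ) (i n : ℕ) (t : ℝ) : ℝ :=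
  (((1 / (n : ℝ)) * ∑ j ∈ Finset.Icc 1 n, x j) - x i)
      / (Real.exp (2 * thetaHat lam gam sig al * T) - 1)
      * Real.exp (thetaPlus lam gam sig al * t)
    - (((1 / (n : ℝ)) * ∑ j ∈ Finset.Icc 1 n, x j) - x i)
      / (1 - Real.exp (-(2 * thetaHat lam gam sig al * T)))
      * Real.exp (thetaMinus lam gam sig al * t)
    - ((1 / (n : ℝ)) * ∑ j ∈ Finset.Icc 1 n, x j)
      / (Real.exp (2 * rhoHat n lam gam sig al * T) - 1)
      * Real.exp (rhoPlus n lam gam sig al * t)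
    + ((1 / (n : ℝ)) * ∑ j ∈ Finset.Icc 1 n, x j)
      / (1 - Real.exp (-(2 * rhoHat n lam gam sig al * T)))
      * Real.exp (rhoMinus n lam gam sig al * t)

/-- the mean-field limit of the equilibrium strategies as the
number of players tends to infinity. -/
theorem stmt_7 (T lam gam sig al : ℝ) (hT : 0 < T)
    (hlam : 0 < lam) (hgam : 0 < gam) (hsig : 0 < sig) (hal : 0 < al)
    (t : ℝ) (ht : t ∈ Icc (0 : ℝ) T)
    (x : ℕ → ℝ) (xbar : ℝ)
    (hconv : Tendsto (fun n : ℕ => (1 / (n : ℝ)) * ∑ j ∈ Finset.Icc 1 n, x j)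
      atTop (nhds xbar))
    (i : ℕ) :
    Tendsto (fun n : ℕ => Xin lam gam sig al T x i n t) atTop
      (nhds ((xbar - x i) / (Real.exp (2 * thetaHat lam gam sig al * T) - 1)
          * Real.exp (thetaPlus lam gam sig al * t)
        - (xbar - x i) / (1 - Real.exp (-(2 * thetaHat lam gam sig al * T)))
          * Real.exp (thetaMinus lam gam sig al * t)
        + xbar * Real.exp (-(gam * t) / lam)
          / (1 - Real.exp (-(gam * T) / lam))
        - xbar / (Real.exp (gam * T / lam) - 1))) := by
  obtain ⟨ht0, htT⟩ := ht
  have hL : Tendsto (fun n : ℕ => 1 / ((n : ℝ) + 1)) atTop (nhds 0) :=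
    tendsto_one_div_add_atTop_nhds_zero_nat
  -- limit of rhoHat
  have heq : ∀ n : ℕ, rhoHat n lam gam sig al =
      Real.sqrt ((1 - 2 * (1 / ((n : ℝ) + 1))) ^ 2 * gam ^ 2
        + 4 * al * sig ^ 2 * lam * (1 / ((n : ℝ) + 1))) / (2 * lam) := by
    intro n
    have hn : (0 : ℝ) < (n : ℝ) + 1 := by positivity
    unfold rhoHat
    rw [show (1 - 2 * (1 / ((n : ℝ) + 1))) ^ 2 * gam ^ 2
        + 4 * al * sig ^ 2 * lam * (1 / ((n : ℝ) + 1))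
        = (((n : ℝ) - 1) ^ 2 * gam ^ 2 + 4 * ((n : ℝ) + 1) * al * sig ^ 2 * lam)
          * (1 / ((n : ℝ) + 1)) ^ 2 by have h := hn.ne'; field_simp; ring]
    rw [Real.sqrt_mul (by positivity), Real.sqrt_sq (by positivity)]
    rw [div_eq_div_iff (by positivity) (by positivity)]
    field_simp
  have hcont : Continuous (fun u : ℝ =>
      Real.sqrt ((1 - 2 * u) ^ 2 * gam ^ 2 + 4 * al * sig ^ 2 * lam * u) / (2 * lam)) := by
    apply Continuous.div_const
    exact Real.continuous_sqrt.comp (by continuity)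
  have hrh : Tendsto (fun n : ℕ => rhoHat n lam gam sig al) atTop (nhds (gam / (2 * lam))) := by
    have h0 : Real.sqrt ((1 - 2 * (0:ℝ)) ^ 2 * gam ^ 2 + 4 * al * sig ^ 2 * lam * 0) / (2 * lam)
        = gam / (2 * lam) := by
      norm_num [Real.sqrt_sq hgam.le]
    have := (hcont.tendsto 0).comp hL
    rw [h0] at this
    exact this.congr fun n => (heq n).symm
  -- limit of the fraction part
  have hfr : Tendsto (fun n : ℕ => -(((n : ℝ) - 1) * gam) / (2 * ((n : ℝ) + 1) * lam)) atTop
      (nhds (-gam / (2 * lam))) := by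
    have heq2 : ∀ n : ℕ, -(((n : ℝ) - 1) * gam) / (2 * ((n : ℝ) + 1) * lam)
        = -((1 - 2 * (1 / ((n : ℝ) + 1))) * gam) / (2 * lam) := by
      intro n
      have hn : (0 : ℝ) < (n : ℝ) + 1 := by positivity
      field_simp
      ring
    have hcont2 : Continuous (fun u : ℝ => -((1 - 2 * u) * gam) / (2 * lam)) := by
      apply Continuous.div_const; continuity
    have := (hcont2.tendsto 0).comp hL
    norm_num at this
    exact this.congr fun n => by rw [heq2 n]; norm_num
  have hrp : Tendsto (fun n : ℕ => rhoPlus n lam gam sig al) atTop (nhds 0) := by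
    have := hfr.add hrh
    rw [show -gam / (2 * lam) + gam / (2 * lam) = (0 : ℝ) by ring] at this
    simpa [rhoPlus] using this
  have hrm : Tendsto (fun n : ℕ => rhoMinus n lam gam sig al) atTop
      (nhds (-(gam / lam))) := by
    have := hfr.sub hrh
    have h : -gam / (2 * lam) - gam / (2 * lam) = -(gam / lam) := by
      field_simp; ring
    rw [h] at this
    exact this.congr fun n => rfl
  -- abbreviations
  set a : ℕ → ℝ := fun n => (1 / (n : ℝ)) * ∑ j ∈ Finset.Icc 1 n, x j with ha
  -- nonzero denominators
  have hgTl : 0 < gam * T / lam := by positivity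
  have hden1 : Real.exp (gam * T / lam) - 1 ≠ 0 := by
    have : 1 < Real.exp (gam * T / lam) := Real.one_lt_exp_iff.mpr hgTl
    linarith
  have hden2 : 1 - Real.exp (-(gam * T / lam)) ≠ 0 := by
    have : Real.exp (-(gam * T / lam)) < 1 := Real.exp_lt_one_iff.mpr (by linarith)
    linarith
  -- tendsto of each of the four terms
  have T1 : Tendsto (fun n : ℕ => (a n - x i)
      / (Real.exp (2 * thetaHat lam gam sig al * T) - 1)
      * Real.exp (thetaPlus lam gam sig al * t)) atTop
      (nhds ((xbar - x i) / (Real.exp (2 * thetaHat lam gam sig al * T) - 1)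
      * Real.exp (thetaPlus lam gam sig al * t))) :=
    (((hconv.sub tendsto_const_nhds).div_const _).mul_const _)
  have T2 : Tendsto (fun n : ℕ => (a n - x i)
      / (1 - Real.exp (-(2 * thetaHat lam gam sig al * T)))
      * Real.exp (thetaMinus lam gam sig al * t)) atTop
      (nhds ((xbar - x i) / (1 - Real.exp (-(2 * thetaHat lam gam sig al * T)))
      * Real.exp (thetaMinus lam gam sig al * t))) :=
    (((hconv.sub tendsto_const_nhds).div_const _).mul_const _)
  have hexp3 : Tendsto (fun n : ℕ => Real.exp (2 * rhoHat n lam gam sig al * T))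
      atTop (nhds (Real.exp (gam * T / lam))) := by
    have h1 : Tendsto (fun n : ℕ => 2 * rhoHat n lam gam sig al * T) atTop
        (nhds (2 * (gam / (2 * lam)) * T)) := (hrh.const_mul 2).mul_const T
    have h2 := (Real.continuous_exp.tendsto _).comp h1
    rw [show 2 * (gam / (2 * lam)) * T = gam * T / lam by field_simp] at h2
    exact h2
  have hexpP : Tendsto (fun n : ℕ => Real.exp (rhoPlus n lam gam sig al * t))
      atTop (nhds 1) := by
    have h1 := (hrp.mul_const t)
    have h2 := (Real.continuous_exp.tendsto _).comp h1
    simpa [Function.comp_def] using h2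
  have hexpM : Tendsto (fun n : ℕ => Real.exp (rhoMinus n lam gam sig al * t))
      atTop (nhds (Real.exp (-(gam * t) / lam))) := by
    have h1 := (hrm.mul_const t)
    have h2 := (Real.continuous_exp.tendsto _).comp h1
    rw [show -(gam / lam) * t = -(gam * t) / lam by ring] at h2
    exact h2
  have T3 : Tendsto (fun n : ℕ => a n
      / (Real.exp (2 * rhoHat n lam gam sig al * T) - 1)
      * Real.exp (rhoPlus n lam gam sig al * t)) atTop
      (nhds (xbar / (Real.exp (gam * T / lam) - 1) * 1)) :=
    ((hconv.div (hexp3.sub tendsto_const_nhds) hden1).mul hexpP)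
  have T4 : Tendsto (fun n : ℕ => a n
      / (1 - Real.exp (-(2 * rhoHat n lam gam sig al * T)))
      * Real.exp (rhoMinus n lam gam sig al * t)) atTop
      (nhds (xbar / (1 - Real.exp (-(gam * T / lam)))
        * Real.exp (-(gam * t) / lam))) := by
    have hexp3' : Tendsto (fun n : ℕ => Real.exp (-(2 * rhoHat n lam gam sig al * T)))
        atTop (nhds (Real.exp (-(gam * T / lam)))) := by
      have h1 : Tendsto (fun n : ℕ => -(2 * rhoHat n lam gam sig al * T)) atTop
          (nhds (-(gam * T / lam))) := by
        have := ((hrh.const_mul 2).mul_const T).neg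
        rw [show -(2 * (gam / (2 * lam)) * T) = -(gam * T / lam) by field_simp] at this
        exact this
      exact (Real.continuous_exp.tendsto _).comp h1
    exact (hconv.div (tendsto_const_nhds.sub hexp3') hden2).mul hexpM
  have key := ((T1.sub T2).sub T3).add T4
  have hXin : (fun n : ℕ => Xin lam gam sig al T x i n t)
      = fun n : ℕ => (a n - x i) / (Real.exp (2 * thetaHat lam gam sig al * T) - 1)
          * Real.exp (thetaPlus lam gam sig al * t)
        - (a n - x i) / (1 - Real.exp (-(2 * thetaHat lam gam sig al * T)))
          * Real.exp (thetaMinus lam gam sig al * t)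
        - a n / (Real.exp (2 * rhoHat n lam gam sig al * T) - 1)
          * Real.exp (rhoPlus n lam gam sig al * t)
        + a n / (1 - Real.exp (-(2 * rhoHat n lam gam sig al * T)))
          * Real.exp (rhoMinus n lam gam sig al * t) := rfl
  rw [hXin]
  convert key using 2
  ring
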